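/- arXiv:1901.05179 — 2 statements merged into one kernel-verified Lean document; each statement's English description precedes it below -/
import Mathlib

section
/- Every extreme point of the polytope P̂ = {P ∈ ℝ^{n×n} : P_{ij} ≥ 0, P 1 = 1, Pᵀ 1 = 1} of doubly stochastic matrices is a permutation matrix (Birkhoff–von Neumann). -/
open Matrix

theorem coe_doublyStochastic_eq_setOf {R n : Type*} [Fintype n] [DecidableEq n] [Semiring R]
    [PartialOrder R] [IsOrderedRing R] :
    (doublyStochastic R n : Set (Matrix n n R)) =
      {Q | (∀ i j, 0 ≤ Q i j) ∧ (∀ i, ∑ j, Q i j = 1) ∧ (∀ j, ∑ i, Q i j = 1)} := by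
  ext Q
  exact mem_doublyStochastic_iff_sum

theorem stmt_11 (n : ℕ) (P : Matrix (Fin n) (Fin n) ℝ)
    (hP : P ∈ Set.extremePoints ℝ
      {Q : Matrix (Fin n) (Fin n) ℝ | (∀ i j, 0 ≤ Q i j) ∧
        (∀ i, ∑ j, Q i j = 1) ∧ (∀ j, ∑ i, Q i j = 1)}) :
    ∃ σ : Equiv.Perm (Fin n), P = σ.permMatrix ℝ := by
  rw [← coe_doublyStochastic_eq_setOf, extremePoints_doublyStochastic] at hP
  obtain ⟨σ, hσ⟩ := hP
  exact ⟨σ, hσ.symm⟩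
end

section
/- (Orthogonal Procrustes) For matrices X, Y ∈ ℝ^{m×d}, the maximum of tr(Rᵀ XᵀY) over orthogonal matrices R ∈ O(d) is attained at R = U Vᵀ, where XᵀY = U Σ Vᵀ is a singular value decomposition, and the maximum value is the sum of the singular values of XᵀY. -/
/-!
With `A = Vᵀ Rᵀ U`, cyclicity of the trace gives `tr (Rᵀ XᵀY) = tr (A Σ) = ∑ i, A i i * Σ i i`.
The matrix `A` is orthogonal, so `A i i ≤ 1`, and since `Σ i i ≥ 0` the sum is at most `tr Σ`;
for `R = U Vᵀ` one gets `A = 1`, so the bound is attained.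
-/

open Matrix

namespace Matrix

variable {n : Type*} [Fintype n]

theorem trace_transpose_mul_mul_mul_transpose {α : Type*} [CommRing α] (R U S V : Matrix n n α) :
    trace (Rᵀ * (U * S * Vᵀ)) = trace (Vᵀ * Rᵀ * U * S) := by
  rw [← Matrix.mul_assoc, ← Matrix.mul_assoc, trace_mul_comm]
  simp only [Matrix.mul_assoc]

variable [DecidableEq n]

theorem mem_unitaryGroup_iff_transpose_mul_self {A : Matrix n n ℝ} :
    A ∈ unitaryGroup n ℝ ↔ Aᵀ * A = 1 := by
  rw [mem_unitaryGroup_iff', star_eq_conjTranspose, conjTranspose_eq_transpose_of_trivial]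

theorem transpose_mem_unitaryGroup {A : Matrix n n ℝ} (hA : A ∈ unitaryGroup n ℝ) :
    Aᵀ ∈ unitaryGroup n ℝ := by
  simpa only [star_eq_conjTranspose, conjTranspose_eq_transpose_of_trivial] using
    Unitary.star_mem hA

theorem trace_mul_le_trace_of_mem_unitaryGroup {A D : Matrix n n ℝ}
    (hA : A ∈ unitaryGroup n ℝ) (hD : D.IsDiag) (hD₀ : ∀ i, 0 ≤ D i i) :
    trace (A * D) ≤ trace D := by
  rw [← hD.diagonal_diag]
  simp only [trace, diag, mul_diagonal, diagonal_apply_eq]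
  exact Finset.sum_le_sum fun i _ =>
    mul_le_of_le_one_left (hD₀ i) ((le_abs_self _).trans (entry_norm_bound_of_unitary hA i i))

end Matrix

theorem stmt_17 (m d : ℕ)
    (X Y : Matrix (Fin m) (Fin d) ℝ)
    (U V Sig : Matrix (Fin d) (Fin d) ℝ)
    (hU : Uᵀ * U = 1) (hV : Vᵀ * V = 1)
    (hSig : ∀ i j, i ≠ j → Sig i j = 0) (hSigpos : ∀ i, 0 ≤ Sig i i)
    (hSVD : Xᵀ * Y = U * Sig * Vᵀ) :
    ((U * Vᵀ)ᵀ * (U * Vᵀ) = 1) ∧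
    (∀ R : Matrix (Fin d) (Fin d) ℝ, Rᵀ * R = 1 →
      Matrix.trace (Rᵀ * (Xᵀ * Y)) ≤ Matrix.trace ((U * Vᵀ)ᵀ * (Xᵀ * Y))) ∧
    Matrix.trace ((U * Vᵀ)ᵀ * (Xᵀ * Y)) = ∑ i, Sig i i := by
  have hUo := mem_unitaryGroup_iff_transpose_mul_self.mpr hU
  have hVt := transpose_mem_unitaryGroup (mem_unitaryGroup_iff_transpose_mul_self.mpr hV)
  have hOpt : trace ((U * Vᵀ)ᵀ * (Xᵀ * Y)) = trace Sig := by
    have hcancel : Vᵀ * (U * Vᵀ)ᵀ * U = 1 := by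
      rw [transpose_mul, transpose_transpose, Matrix.mul_assoc, Matrix.mul_assoc, hU,
        Matrix.mul_one, hV]
    rw [hSVD, trace_transpose_mul_mul_mul_transpose, hcancel, Matrix.one_mul]
  refine ⟨mem_unitaryGroup_iff_transpose_mul_self.mp (Submonoid.mul_mem _ hUo hVt),
    fun R hR => ?_, hOpt⟩
  rw [hOpt, hSVD, trace_transpose_mul_mul_mul_transpose]
  have hRt := transpose_mem_unitaryGroup (mem_unitaryGroup_iff_transpose_mul_self.mpr hR)
  exact trace_mul_le_trace_of_mem_unitaryGroup
    (Submonoid.mul_mem _ (Submonoid.mul_mem _ hVt hRt) hUo) (fun i j h => hSig i j h) hSigpos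
end
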